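/- arXiv:2211.17169 — 8 statements merged into one kernel-verified Lean document; each statement's English description precedes it below -/
import Mathlib

section
/- The modified fractional aggregation function satisfies individually rational aversion to enemies: for any finite coalition C containing agent i with |C| ≥ 2, any j ∈ C \ {i} with u_i(j) < 0, if MF_i(C, u_i) ≥ 0 then MF_i(C \ {j}, u_i) ≥ MF_i(C, u_i). -/
/-- Modified fractional aggregation of coalition `C` for agent `i` under utilities `u`. -/
noncomputable def MF {N : Type*} [DecidableEq N] (i : N) (C : Finset N) (u : N → ℚ) : ℚ :=
  if 2 ≤ C.card then (∑ k ∈ C.erase i, u k) / ((C.card : ℚ) - 1) else 0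

/- Removing an enemy `j` from `C` changes `MF i` from `S / (n - 1)` to `(S - u j) / (n - 2)`,
where `S` is the total utility of the other members and `n = |C|`. Individual rationality
gives `S ≥ 0`, which rules out `n = 2` (then `S = u j < 0`); for `n ≥ 3` both the smaller
denominator and the larger numerator can only increase the average. -/

theorem div_add_one_le_sub_div {α : Type*} [Field α] [LinearOrder α] [IsStrictOrderedRing α]
    {s x m : α} (hs : 0 ≤ s) (hx : x ≤ 0) (hm : 0 < m) : s / (m + 1) ≤ (s - x) / m :=
  calc s / (m + 1) ≤ s / m := div_le_div_of_nonneg_left hs hm (by linarith)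
    _ ≤ (s - x) / m := div_le_div_of_nonneg_right (by linarith) hm.le

section MF

variable {N : Type*} [DecidableEq N] {i : N} {C : Finset N} {u : N → ℚ}

theorem MF_of_two_le_card (hC : 2 ≤ C.card) :
    MF i C u = (∑ k ∈ C.erase i, u k) / ((C.card : ℚ) - 1) :=
  if_pos hC

theorem sum_erase_nonneg_of_MF_nonneg (hC : 2 ≤ C.card) (hIR : 0 ≤ MF i C u) :
    0 ≤ ∑ k ∈ C.erase i, u k := by
  have hpos : (0 : ℚ) < (C.card : ℚ) - 1 := by
    have : (2 : ℚ) ≤ C.card := by exact_mod_cast hC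
    linarith
  rw [MF_of_two_le_card hC] at hIR
  simpa using (le_div_iff₀ hpos).mp hIR

theorem erase_eq_singleton_of_card_eq_two {i j : N} (hC : C.card = 2) (hi : i ∈ C) (hj : j ∈ C)
    (hji : j ≠ i) : C.erase i = {j} := by
  have hjCi : j ∈ C.erase i := Finset.mem_erase.mpr ⟨hji, hj⟩
  have hcard : (C.erase i).card ≤ 1 := by simp [Finset.card_erase_of_mem hi, hC]
  exact Finset.eq_singleton_iff_unique_mem.mpr
    ⟨hjCi, fun x hx => Finset.card_le_one.mp hcard x hx j hjCi⟩

end MF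

/-- The modified fractional aggregation function satisfies individually rational
aversion to enemies. -/
theorem stmt_2 {N : Type*} [DecidableEq N] (i : N) (C : Finset N) (hi : i ∈ C)
    (hC : 2 ≤ C.card) (j : N) (hj : j ∈ C) (hji : j ≠ i) (u : N → ℚ)
    (hu : u j < 0) (hIR : 0 ≤ MF i C u) :
    MF i C u ≤ MF i (C.erase j) u := by
  have hjCi : j ∈ C.erase i := Finset.mem_erase.mpr ⟨hji, hj⟩
  have hS := sum_erase_nonneg_of_MF_nonneg hC hIR
  have h3 : 3 ≤ C.card := by
    by_contra! h
    rw [erase_eq_singleton_of_card_eq_two (by omega) hi hj hji, Finset.sum_singleton] at hS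
    exact hu.not_ge hS
  have hcard : (C.erase j).card = C.card - 1 := Finset.card_erase_of_mem hj
  rw [MF_of_two_le_card hC, MF_of_two_le_card (by omega), Finset.erase_right_comm,
    Finset.sum_erase_eq_sub hjCi, hcard, Nat.cast_sub (by omega), Nat.cast_one]
  have h3' : (3 : ℚ) ≤ C.card := by exact_mod_cast h3
  rw [show (C.card : ℚ) - 1 - 1 = C.card - 2 by ring, ← show (C.card : ℚ) - 2 + 1 = C.card - 1 by ring]
  exact div_add_one_le_sub_div hS hu.le (by linarith)
end

section
/- The modified fractional aggregation function satisfies enemy domination: for every utility function u_i: N → ℚ (N finite) and every agent j ≠ i, there exists a constant c such that for every utility function u_i' with u_i'(k) ≤ u_i(k) for all k and u_i'(j) ≤ c, and every coalition C with i, j ∈ C, it holds that MF_i(C, u_i') < 0 = MF_i({i}, u_i'). -/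
open Finset

theorem Finset.sum_le_apply_add_sum_posPart {ι α : Type*} [Fintype ι] [DecidableEq ι]
    [AddCommGroup α] [LinearOrder α] [IsOrderedAddMonoid α] {f g : ι → α} (hfg : f ≤ g)
    {s : Finset ι} {j : ι} (hj : j ∈ s) :
    ∑ k ∈ s, f k ≤ f j + ∑ k, (g k)⁺ := by
  rw [← add_sum_erase s f hj]
  gcongr
  calc ∑ k ∈ s.erase j, f k ≤ ∑ k ∈ s.erase j, (g k)⁺ :=
        sum_le_sum fun k _ ↦ (hfg k).trans (le_posPart _)
    _ ≤ ∑ k, (g k)⁺ :=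
        sum_le_sum_of_subset_of_nonneg (subset_univ _) fun k _ _ ↦ posPart_nonneg _

section MF

variable {N : Type*} [DecidableEq N]

@[simp]
theorem MF_singleton (i : N) (u : N → ℚ) : MF i {i} u = 0 := by
  simp [MF]

theorem MF_neg_iff {i : N} {C : Finset N} (hC : 2 ≤ #C) (u : N → ℚ) :
    MF i C u < 0 ↔ ∑ k ∈ C.erase i, u k < 0 := by
  have hden : (0 : ℚ) < #C - 1 := by
    have : (2 : ℚ) ≤ #C := by exact_mod_cast hC
    linarith
  rw [MF, if_pos hC, div_lt_iff₀ hden, zero_mul]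

end MF

/-- The modified fractional aggregation function satisfies enemy domination:
for every utility function `u` and agent `j ≠ i` there is a constant `c` such that
whenever all utilities are at most their values in `u` and the utility for `j` is
at most `c`, every coalition containing both `i` and `j` is strictly worse for `i`
than the singleton `{i}` (which has value `0`). -/
theorem stmt_7 {N : Type*} [Fintype N] [DecidableEq N] (i : N) (u : N → ℚ)
    (j : N) (hji : j ≠ i) :
    ∃ c : ℚ, ∀ u' : N → ℚ, (∀ k, u' k ≤ u k) → u' j ≤ c →
      ∀ C : Finset N, i ∈ C → j ∈ C →
        MF i C u' < MF i ({i} : Finset N) u' := by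
  refine ⟨-(∑ k, (u k)⁺) - 1, fun u' hu hj C hiC hjC ↦ ?_⟩
  have hC : 2 ≤ #C := one_lt_card.mpr ⟨j, hjC, i, hiC, hji⟩
  rw [MF_singleton, MF_neg_iff hC]
  have := sum_le_apply_add_sum_posPart hu (mem_erase.mpr ⟨hji, hjC⟩)
  linarith
end

section
/- The modified fractional aggregation function satisfies single friend desire: for any finite coalition C ∋ i, agent j ∈ C \ {i}, and utility function u_i with u_i(j) > 0 and u_i(k) ≤ 0 for all k ∈ C \ {i, j}, it holds that MF_i(C, u_i) > MF_i(C \ {j}, u_i). -/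
lemma lt_sub_one_mul_add_div_self {x b n : ℚ} (hx : x ≤ 0) (hb : 0 < b) (hn : 1 ≤ n) :
    x < ((n - 1) * x + b) / n := by
  rw [lt_div_iff₀ (by linarith)]
  linarith

namespace MF

variable {N : Type*} [DecidableEq N] {i j : N} {D : Finset N} {u : N → ℚ}

-- Also for `D = {i}`, where `MF` is `0` by convention and the sum is empty.
lemma card_sub_one_mul (hi : i ∈ D) :
    ((D.card : ℚ) - 1) * MF i D u = ∑ k ∈ D.erase i, u k := by
  unfold MF
  split_ifs with h2
  · have hne : (D.card : ℚ) - 1 ≠ 0 := by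
      have : (2 : ℚ) ≤ D.card := by exact_mod_cast h2
      linarith
    exact mul_div_cancel₀ _ hne
  · have hcard : D.card = 1 := by
      have := Finset.card_pos.2 ⟨i, hi⟩
      omega
    have hempty : D.erase i = ∅ := by
      rw [← Finset.card_eq_zero, Finset.card_erase_of_mem hi, hcard]
    simp [hempty]

lemma nonpos (hu : ∀ k ∈ D, k ≠ i → u k ≤ 0) : MF i D u ≤ 0 := by
  unfold MF
  split_ifs with h2
  · apply div_nonpos_of_nonpos_of_nonneg
    · exact Finset.sum_nonpos fun k hk =>
        hu k (Finset.mem_of_mem_erase hk) (Finset.ne_of_mem_erase hk)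
    · have : (2 : ℚ) ≤ D.card := by exact_mod_cast h2
      linarith
  · exact le_rfl

lemma insert_eq (hi : i ∈ D) (hj : j ∉ D) :
    MF i (insert j D) u = (((D.card : ℚ) - 1) * MF i D u + u j) / D.card := by
  have hji : j ≠ i := ne_of_mem_of_not_mem hi hj |>.symm
  have hcard : (insert j D).card = D.card + 1 := Finset.card_insert_of_notMem hj
  have h2 : 2 ≤ (insert j D).card := by
    have := Finset.card_pos.2 ⟨i, hi⟩
    omega
  rw [MF, if_pos h2, Finset.erase_insert_of_ne hji,
    Finset.sum_insert fun h => hj (Finset.mem_of_mem_erase h), card_sub_one_mul hi, hcard]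
  push_cast
  ring

end MF

/-- The modified fractional aggregation function satisfies single friend desire:
a coalition containing exactly one friend is strictly preferred to the same
coalition without that friend. -/
theorem stmt_10 {N : Type*} [DecidableEq N] (i : N) (C : Finset N) (hi : i ∈ C)
    (j : N) (hj : j ∈ C) (hji : j ≠ i) (u : N → ℚ)
    (hpos : 0 < u j) (hnonpos : ∀ k ∈ C, k ≠ i → k ≠ j → u k ≤ 0) :
    MF i (C.erase j) u < MF i C u := by
  have hiD : i ∈ C.erase j := Finset.mem_erase.2 ⟨hji.symm, hi⟩
  have hMF := MF.insert_eq (u := u) hiD (Finset.notMem_erase j C)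
  rw [Finset.insert_erase hj] at hMF
  rw [hMF]
  refine lt_sub_one_mul_add_div_self (MF.nonpos fun k hk hki => ?_) hpos ?_
  · exact hnonpos k (Finset.mem_of_mem_erase hk) hki (Finset.ne_of_mem_erase hk)
  · exact_mod_cast Finset.card_pos.2 ⟨i, hiD⟩
end

section
/- There exists a 3-agent additively separable hedonic game with appreciative agents admitting an infinite sequence of individually rational core deviations. Concretely, with N = {a,b,c}, initial utilities u_a(b)=u_b(c)=u_c(a)=4 and u_a(c)=u_b(a)=u_c(b)=1, the cyclic sequence of pairwise coalition formations {a,b}, {b,c}, {a,c}, {a,b}, ... starting from the singleton partition is an infinite sequence of core deviations: at each step, both deviating agents strictly prefer the new pair coalition to their current coalition with respect to their current (appreciation-updated) additively separable utilities. -/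
/-- The coalition performing a (group) core deviation at step `t ≥ 1`:
`{a,b}` at steps `≡ 1`, `{b,c}` at steps `≡ 2`, `{a,c}` at steps `≡ 0 (mod 3)`,
where `a = 0`, `b = 1`, `c = 2`. -/
def devCoal (t : ℕ) : Finset (Fin 3) :=
  if t % 3 = 1 then {0, 1} else if t % 3 = 2 then {1, 2} else {0, 2}

/-- The partition after `t` steps, given by the coalition of each agent:
initially all agents are in singletons, and after step `t ≥ 1` the deviating
pair is together and the remaining agent is alone. -/
def coalOf (t : ℕ) (i : Fin 3) : Finset (Fin 3) :=
  if t = 0 then {i} else if i ∈ devCoal t then devCoal t else {i}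

/-- Initial utilities: `u_a(b) = u_b(c) = u_c(a) = 4` and `u_a(c) = u_b(a) = u_c(b) = 1`. -/
def u0 : Fin 3 → Fin 3 → ℚ := ![![0, 4, 1], ![1, 0, 4], ![4, 1, 0]]

/-- Utilities evolving by appreciation: whenever a coalition `D` forms, each member
of `D` increases her utility for every other member of `D` by `1`. -/
def util : ℕ → Fin 3 → Fin 3 → ℚ
  | 0 => u0
  | (t + 1) => fun i j =>
      if i ∈ devCoal (t + 1) ∧ j ∈ devCoal (t + 1) ∧ i ≠ j then util t i j + 1
      else util t i j

/-!
Every pair forms exactly once in any three consecutive steps, so from step `t` to step `t + 3`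
each mutual utility grows by exactly `1`, while for `t ≠ 0` the partition is the same. A deviator
gains one partner and leaves at most one, so the side of the new coalition grows at least as fast
as the side of the old one: the strict preferences, checked directly at the steps `t < 4`,
propagate to all `t`. Individual rationality holds because appreciation never lowers the
nonnegative initial utilities.
-/
lemma devCoal_add_three (t : ℕ) : devCoal (t + 3) = devCoal t := by
  simp [devCoal]

lemma coalOf_add_three {t : ℕ} (ht : t ≠ 0) : coalOf (t + 3) = coalOf t := by
  funext i
  simp [coalOf, ht, devCoal_add_three]

lemma card_devCoal (t : ℕ) : (devCoal t).card = 2 := by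
  unfold devCoal
  split_ifs <;> rfl

lemma mem_coalOf (t : ℕ) (i : Fin 3) : i ∈ coalOf t i := by
  unfold coalOf
  split_ifs <;> simp_all

lemma card_coalOf_le (t : ℕ) (i : Fin 3) : (coalOf t i).card ≤ 2 := by
  unfold coalOf
  split_ifs <;> simp [card_devCoal]

lemma util_nonneg (t : ℕ) (i j : Fin 3) : 0 ≤ util t i j := by
  induction t with
  | zero => fin_cases i <;> fin_cases j <;> simp [util, u0]
  | succ t ih =>
    simp only [util]
    split_ifs <;> linarith

lemma util_add_three (t : ℕ) (i j : Fin 3) :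
    util (t + 3) i j = util t i j + if i = j then 0 else 1 := by
  simp only [util]
  have h : t % 3 = 0 ∨ t % 3 = 1 ∨ t % 3 = 2 := by omega
  rcases h with h | h | h <;>
  · simp only [devCoal, show (t + 1) % 3 = (t % 3 + 1) % 3 by omega,
      show (t + 2) % 3 = (t % 3 + 2) % 3 by omega, show (t + 3) % 3 = t % 3 by omega, h]
    fin_cases i <;> fin_cases j <;> simp +decide

lemma sum_erase_util_add_three (t : ℕ) (s : Finset (Fin 3)) (i : Fin 3) :
    ∑ j ∈ s.erase i, util (t + 3) i j = ∑ j ∈ s.erase i, util t i j + (s.erase i).card := by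
  rw [Finset.card_eq_sum_ones, Nat.cast_sum, ← Finset.sum_add_distrib]
  refine Finset.sum_congr rfl fun j hj => ?_
  simp [util_add_three, (Finset.ne_of_mem_erase hj).symm]

def PrefersDeviation (t : ℕ) : Prop :=
  ∀ i ∈ devCoal (t + 1),
    ∑ j ∈ (coalOf t i).erase i, util t i j < ∑ j ∈ (devCoal (t + 1)).erase i, util t i j

lemma prefersDeviation_of_lt_four {t : ℕ} (ht : t < 4) : PrefersDeviation t := by
  interval_cases t <;>
  · intro i hi
    simp only [devCoal, coalOf] at hi ⊢
    fin_cases i <;> simp_all [util, u0, devCoal] <;> norm_num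

lemma PrefersDeviation.add_three {t : ℕ} (ht : t ≠ 0) (h : PrefersDeviation t) :
    PrefersDeviation (t + 3) := by
  intro i hi
  rw [show t + 3 + 1 = t + 1 + 3 by rfl, devCoal_add_three] at hi ⊢
  rw [coalOf_add_three ht, sum_erase_util_add_three, sum_erase_util_add_three]
  have hcard : ((coalOf t i).erase i).card ≤ ((devCoal (t + 1)).erase i).card := by
    rw [Finset.card_erase_of_mem hi, Finset.card_erase_of_mem (mem_coalOf t i), card_devCoal]
    have := card_coalOf_le t i
    omega
  have := (Nat.cast_le (α := ℚ)).2 hcard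
  linarith [h i hi]

theorem prefersDeviation (t : ℕ) : PrefersDeviation t := by
  induction t using Nat.strong_induction_on with
  | _ t ih =>
    by_cases ht : t < 4
    · exact prefersDeviation_of_lt_four ht
    · obtain ⟨s, rfl⟩ : ∃ s, t = s + 3 := ⟨t - 3, by omega⟩
      exact (ih s (by omega)).add_three (by omega)

/-- The cyclic sequence `{a,b}, {b,c}, {a,c}, {a,b}, …` of pairwise coalition
formations, starting from the singleton partition, is an infinite sequence of
individually rational core deviations for the appreciative agents of this
3-agent additively separable hedonic game: at every step each deviating agent
strictly prefers the new pair coalition to her current coalition with respect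
to her current (appreciation-updated) additively separable utilities, and the
new coalition is individually rational for her. -/
theorem stmt_11 :
    ∀ t : ℕ, ∀ i ∈ devCoal (t + 1),
      (∑ j ∈ (coalOf t i).erase i, util t i j) <
        (∑ j ∈ (devCoal (t + 1)).erase i, util t i j) ∧
      0 ≤ ∑ j ∈ (devCoal (t + 1)).erase i, util t i j :=
  fun t i hi => ⟨prefersDeviation t i hi, Finset.sum_nonneg fun j _ => util_nonneg t i j⟩
end

section
/- In any hedonic game with resentful agents whose aggregation functions satisfy aversion to enemies, every infinite sequence of Nash deviations contains only finitely many deviations that are not contractual Nash deviations. -/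
/-! Resent only lowers utilities, and lowers `u i k` by one each time `k` abandons `i`.
So `i` can be abandoned by a friend `k` (one with `u i k ≥ 0`) only finitely often;
by aversion to enemies, abandonment by an enemy never makes `i` worse off. As there are
finitely many pairs `(i, k)`, only finitely many deviations fail to be contractual. -/

theorem Antitone.finite_setOf_nonneg_and_succ_le_sub_one {α : Type*} [CommRing α] [LinearOrder α]
    [IsStrictOrderedRing α] [Archimedean α] {f : ℕ → α} (hf : Antitone f) :
    {t | 0 ≤ f t ∧ f (t + 1) ≤ f t - 1}.Finite := by
  by_contra hinf
  set p : ℕ → Prop := fun t => 0 ≤ f t ∧ f (t + 1) ≤ f t - 1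
  have hdrop : ∀ n, f (Nat.nth p n) ≤ f (Nat.nth p 0) - n := by
    intro n
    induction n with
    | zero => simp
    | succ n ih =>
      have hlt : Nat.nth p n + 1 ≤ Nat.nth p (n + 1) := Nat.nth_strictMono hinf n.lt_succ_self
      calc f (Nat.nth p (n + 1)) ≤ f (Nat.nth p n + 1) := hf hlt
        _ ≤ f (Nat.nth p n) - 1 := (Nat.nth_mem_of_infinite hinf n).2
        _ ≤ f (Nat.nth p 0) - (n + 1 : ℕ) := by push_cast; linarith
  obtain ⟨n, hn⟩ := exists_nat_gt (f (Nat.nth p 0))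
  have := (Nat.nth_mem_of_infinite hinf n).1
  linarith [hdrop n]

theorem notMem_of_mem_deviator_coalition {N : Type*} [DecidableEq N] {P : N → Finset N}
    {C : Finset N} {d i : N} (hmem : ∀ i, i ∈ P i) (hpart : ∀ i j, j ∈ P i → P j = P i)
    (hjoin : C = {d} ∨ ∃ j, d ∉ P j ∧ C = insert d (P j)) (hi : i ∈ P d) (hne : i ≠ d) :
    i ∉ C := by
  have hdi : d ∈ P i := hpart d i hi ▸ hmem d
  rcases hjoin with rfl | ⟨j, hdj, rfl⟩
  · simpa using hne
  · rw [Finset.mem_insert, not_or]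
    exact ⟨hne, fun hij => hdj (hpart j i hij ▸ hdi)⟩

theorem stmt_14_general {N : Type*} [Fintype N] [DecidableEq N]
    (A : N → Finset N → (N → ℚ) → ℚ)
    (hATE : ∀ (i : N) (C : Finset N) (u : N → ℚ) (j : N),
      j ∈ C → j ≠ i → u j < 0 → A i C u ≤ A i (C.erase j) u)
    (π : ℕ → N → Finset N) (u : ℕ → N → N → ℚ) (dev : ℕ → N)
    (hmem : ∀ t i, i ∈ π t i)
    (hpart : ∀ t i j, j ∈ π t i → π t j = π t i)
    (hdev : ∀ t i, i ≠ dev (t + 1) →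
      π (t + 1) i =
        if i ∈ π (t + 1) (dev (t + 1)) then π (t + 1) (dev (t + 1))
        else (π t i).erase (dev (t + 1)))
    (hjoin : ∀ t, π (t + 1) (dev (t + 1)) = {dev (t + 1)} ∨
      ∃ i, i ≠ dev (t + 1) ∧ dev (t + 1) ∉ π t i ∧
        π (t + 1) (dev (t + 1)) = insert (dev (t + 1)) (π t i))
    (hres : ∀ t i j, u (t + 1) i j =
      if i ≠ dev (t + 1) ∧ j = dev (t + 1) ∧ j ∈ π t i then u t i j - 1
      else u t i j) :
    {t : ℕ | ∃ i ∈ π t (dev (t + 1)), i ≠ dev (t + 1) ∧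
      A i (π (t + 1) i) (u t i) < A i (π t i) (u t i)}.Finite := by
  have hanti : ∀ i k, Antitone fun t => u t i k := fun i k =>
    antitone_nat_of_succ_le fun t => by rw [hres]; split_ifs <;> linarith
  refine (Set.finite_iUnion fun p : N × N =>
    (hanti p.1 p.2).finite_setOf_nonneg_and_succ_le_sub_one).subset ?_
  rintro t ⟨i, hi, hne, hworse⟩
  set d := dev (t + 1)
  have hdi : d ∈ π t i := hpart t d i hi ▸ hmem t d
  have habandoned : π (t + 1) i = (π t i).erase d := by
    refine (hdev t i hne).trans (if_neg ?_)
    exact notMem_of_mem_deviator_coalition (hmem t) (hpart t)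
      ((hjoin t).imp_right fun ⟨j, _, hj⟩ => ⟨j, hj⟩) hi hne
  have hfriend : 0 ≤ u t i d := by
    by_contra! henemy
    exact (hATE i (π t i) (u t i) d hdi (Ne.symm hne) henemy).not_gt (habandoned ▸ hworse)
  refine Set.mem_iUnion.2 ⟨(i, d), hfriend, ?_⟩
  rw [hres, if_pos ⟨hne, rfl, hdi⟩]

/-- In any hedonic game with resentful agents whose aggregation functions satisfy
aversion to enemies, every infinite sequence of Nash deviations contains only
finitely many deviations that are not contractual Nash deviations.

The data is: a finite agent set `N`, aggregation functions `A i`, a sequence of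
partitions given by the coalition `π t i` of each agent `i` at time `t`, evolving
at each step `t + 1` by a single-agent deviation of agent `dev (t + 1)` (every
non-deviator either stays with the deviator's new coalition or keeps her old
coalition minus the deviator; the deviator moves to a singleton or joins an
existing coalition of the current partition), utilities `u t i` evolving by
resent, and every deviation being a Nash deviation.  The conclusion: the set of
steps at which some abandoned agent is made strictly worse (i.e. the deviation
is not a CNS deviation) is finite. -/
theorem stmt_14 {N : Type*} [Fintype N] [DecidableEq N]
    (A : N → Finset N → (N → ℚ) → ℚ)
    (hATE : ∀ (i : N) (C : Finset N) (u : N → ℚ) (j : N),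
      j ∈ C → j ≠ i → u j < 0 → A i C u ≤ A i (C.erase j) u)
    (π : ℕ → N → Finset N) (u : ℕ → N → N → ℚ) (dev : ℕ → N)
    (hmem : ∀ t i, i ∈ π t i)
    (hpart : ∀ t i j, j ∈ π t i → π t j = π t i)
    (hdev : ∀ t i, i ≠ dev (t + 1) →
      π (t + 1) i =
        if i ∈ π (t + 1) (dev (t + 1)) then π (t + 1) (dev (t + 1))
        else (π t i).erase (dev (t + 1)))
    (hjoin : ∀ t, π (t + 1) (dev (t + 1)) = {dev (t + 1)} ∨
      ∃ i, i ≠ dev (t + 1) ∧ dev (t + 1) ∉ π t i ∧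
        π (t + 1) (dev (t + 1)) = insert (dev (t + 1)) (π t i))
    (hres : ∀ t i j, u (t + 1) i j =
      if i ≠ dev (t + 1) ∧ j = dev (t + 1) ∧ j ∈ π t i then u t i j - 1
      else u t i j)
    (hNS : ∀ t, A (dev (t + 1)) (π t (dev (t + 1))) (u t (dev (t + 1))) <
      A (dev (t + 1)) (π (t + 1) (dev (t + 1))) (u t (dev (t + 1)))) :
    {t : ℕ | ∃ i ∈ π t (dev (t + 1)), i ≠ dev (t + 1) ∧
      A i (π (t + 1) i) (u t i) < A i (π t i) (u t i)}.Finite :=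
  stmt_14_general A hATE π u dev hmem hpart hdev hjoin hres
end

section
/- In any additively separable hedonic game with appreciative agents, every infinite sequence of Nash deviations contains only finitely many deviations that are not individual-stability deviations. -/
/-! Utilities only grow under appreciation. If a member `i` of the coalition joined by `d` is made
strictly worse off, then `u i d < 0` at that moment, and the step raises `u i d` by `1`. A
nondecreasing rational sequence can increase by `1` while negative only finitely often, and there
are finitely many pairs `(i, d)`. -/

theorem Monotone.finite_setOf_lt_and_add_one_le {α : Type*} [Ring α] [LinearOrder α]
    [IsStrictOrderedRing α] [FloorRing α] {f : ℕ → α} (hf : Monotone f) (c : α) :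
    {t | f t < c ∧ f t + 1 ≤ f (t + 1)}.Finite := by
  set S := {t | f t < c ∧ f t + 1 ≤ f (t + 1)}
  have hstrict : StrictMonoOn (fun t => ⌊f t⌋) S := by
    intro a ha b _ hab
    calc ⌊f a⌋ < ⌊f a⌋ + 1 := lt_add_one _
      _ = ⌊f a + 1⌋ := (Int.floor_add_one _).symm
      _ ≤ ⌊f b⌋ := Int.floor_mono (ha.2.trans (hf hab))
  have hmaps : Set.MapsTo (fun t => ⌊f t⌋) S (Set.Icc ⌊f 0⌋ ⌊c⌋) := fun t ht =>
    ⟨Int.floor_mono (hf (Nat.zero_le t)), Int.floor_mono ht.1.le⟩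
  exact (Set.finite_Icc _ _).subset (Set.image_subset_iff.mpr hmaps)
    |>.of_finite_image hstrict.injOn

section HedonicGame

variable {N : Type*} [DecidableEq N] (π : ℕ → N → Finset N) (u : ℕ → N → N → ℚ) (dev : ℕ → N)

theorem monotone_utility_of_appreciation
    (happ : ∀ t i j, u (t + 1) i j =
      if i ≠ dev (t + 1) ∧ j = dev (t + 1) ∧ j ∈ π (t + 1) i then u t i j + 1
      else u t i j) (i j : N) :
    Monotone (u · i j) := by
  refine monotone_nat_of_le_succ fun t => ?_
  rw [happ]
  split_ifs <;> linarith

theorem coalition_succ_of_mem_joined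
    (hpart : ∀ t i j, j ∈ π t i → π t j = π t i)
    (hdev : ∀ t i, i ≠ dev (t + 1) →
      π (t + 1) i =
        if i ∈ π (t + 1) (dev (t + 1)) then π (t + 1) (dev (t + 1))
        else (π t i).erase (dev (t + 1)))
    (hjoin : ∀ t, π (t + 1) (dev (t + 1)) = {dev (t + 1)} ∨
      ∃ i, i ≠ dev (t + 1) ∧ dev (t + 1) ∉ π t i ∧
        π (t + 1) (dev (t + 1)) = insert (dev (t + 1)) (π t i))
    {t : ℕ} {i : N} (hi : i ∈ π (t + 1) (dev (t + 1))) (hne : i ≠ dev (t + 1)) :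
    π (t + 1) i = insert (dev (t + 1)) (π t i) ∧ dev (t + 1) ∉ π t i := by
  rcases hjoin t with hsingle | ⟨a, -, hda, hjoined⟩
  · rw [hsingle, Finset.mem_singleton] at hi
    exact absurd hi hne
  · have hia : i ∈ π t a := by
      rw [hjoined] at hi
      exact (Finset.mem_insert.mp hi).resolve_left hne
    rw [hdev t i hne, if_pos hi, hjoined, hpart t a i hia]
    exact ⟨rfl, hda⟩

end HedonicGame

theorem stmt_15_general {N : Type*} [Fintype N] [DecidableEq N]
    (π : ℕ → N → Finset N) (u : ℕ → N → N → ℚ) (dev : ℕ → N)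
    (hpart : ∀ t i j, j ∈ π t i → π t j = π t i)
    (hdev : ∀ t i, i ≠ dev (t + 1) →
      π (t + 1) i =
        if i ∈ π (t + 1) (dev (t + 1)) then π (t + 1) (dev (t + 1))
        else (π t i).erase (dev (t + 1)))
    (hjoin : ∀ t, π (t + 1) (dev (t + 1)) = {dev (t + 1)} ∨
      ∃ i, i ≠ dev (t + 1) ∧ dev (t + 1) ∉ π t i ∧
        π (t + 1) (dev (t + 1)) = insert (dev (t + 1)) (π t i))
    (happ : ∀ t i j, u (t + 1) i j =
      if i ≠ dev (t + 1) ∧ j = dev (t + 1) ∧ j ∈ π (t + 1) i then u t i j + 1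
      else u t i j) :
    {t : ℕ | ∃ i ∈ π (t + 1) (dev (t + 1)), i ≠ dev (t + 1) ∧
      (∑ j ∈ (π (t + 1) i).erase i, u t i j) < ∑ j ∈ (π t i).erase i, u t i j}.Finite := by
  refine (Set.finite_iUnion fun i => Set.finite_iUnion fun d =>
    (monotone_utility_of_appreciation π u dev happ i d).finite_setOf_lt_and_add_one_le 0).subset ?_
  rintro t ⟨i, hi, hne, hworse⟩
  obtain ⟨hcoalition, hnew⟩ := coalition_succ_of_mem_joined π dev hpart hdev hjoin hi hne
  have hgain : ∑ j ∈ (π (t + 1) i).erase i, u t i j =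
      u t i (dev (t + 1)) + ∑ j ∈ (π t i).erase i, u t i j := by
    rw [hcoalition, Finset.erase_insert_of_ne hne.symm,
      Finset.sum_insert fun h => hnew (Finset.mem_of_mem_erase h)]
  simp only [Set.mem_iUnion, Set.mem_ofPred_eq]
  refine ⟨i, dev (t + 1), by linarith, ?_⟩
  rw [happ, if_pos ⟨hne, rfl, hcoalition ▸ Finset.mem_insert_self _ _⟩]

/-- In any additively separable hedonic game with appreciative agents, every
infinite sequence of Nash deviations contains only finitely many deviations
that are not individual-stability deviations.

The data is: a finite agent set `N`, a sequence of partitions given by the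
coalition `π t i` of each agent `i` at time `t`, evolving at each step `t + 1`
by a single-agent deviation of agent `dev (t + 1)` (as before the deviator
moves to a singleton or joins an existing coalition of the current partition),
utilities `u t i` evolving by appreciation (members of the joined coalition
increase their utility for the joining deviator by `1`), additive aggregation
`Σ_{j ∈ C \ {i}} u i j`, and every deviation being a Nash deviation.  The
conclusion: the set of steps at which some member of the joined coalition is
made strictly worse (i.e. the deviation is not an IS deviation) is finite. -/
theorem stmt_15 {N : Type*} [Fintype N] [DecidableEq N]
    (π : ℕ → N → Finset N) (u : ℕ → N → N → ℚ) (dev : ℕ → N)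
    (hmem : ∀ t i, i ∈ π t i)
    (hpart : ∀ t i j, j ∈ π t i → π t j = π t i)
    (hdev : ∀ t i, i ≠ dev (t + 1) →
      π (t + 1) i =
        if i ∈ π (t + 1) (dev (t + 1)) then π (t + 1) (dev (t + 1))
        else (π t i).erase (dev (t + 1)))
    (hjoin : ∀ t, π (t + 1) (dev (t + 1)) = {dev (t + 1)} ∨
      ∃ i, i ≠ dev (t + 1) ∧ dev (t + 1) ∉ π t i ∧
        π (t + 1) (dev (t + 1)) = insert (dev (t + 1)) (π t i))
    (happ : ∀ t i j, u (t + 1) i j =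
      if i ≠ dev (t + 1) ∧ j = dev (t + 1) ∧ j ∈ π (t + 1) i then u t i j + 1
      else u t i j)
    (hNS : ∀ t,
      (∑ j ∈ (π t (dev (t + 1))).erase (dev (t + 1)), u t (dev (t + 1)) j) <
        ∑ j ∈ (π (t + 1) (dev (t + 1))).erase (dev (t + 1)), u t (dev (t + 1)) j) :
    {t : ℕ | ∃ i ∈ π (t + 1) (dev (t + 1)), i ≠ dev (t + 1) ∧
      (∑ j ∈ (π (t + 1) i).erase i, u t i j) < ∑ j ∈ (π t i).erase i, u t i j}.Finite :=
  stmt_15_general π u dev hpart hdev hjoin happ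
end

section
/- In any additively separable hedonic game with appreciative agents, every execution of the contractual Nash stability (CNS) dynamics converges, i.e., there is no infinite sequence of CNS deviations. -/
/-!
Eventually every join that happens at all happens infinitely often, and an agent joined
infinitely often by `j` ends up valuing `j` positively. Two agents cannot join each other
infinitely often: once they value each other positively, CNS forbids either of them to leave
the other, so the second can never join the first again. Hence, from some time on, a
deviator's utilities for the members of the coalition it joins are frozen, and the values an
agent `d` that deviates infinitely often obtains by its deviations lie in a finite set. But
from that time on the value of `d`'s coalition never decreases (agents leave it only with
`d`'s consent, and join it only when `d` values them positively) and strictly increases at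
each deviation of `d`.
-/

open Filter

theorem Set.infinite_of_le_succ_of_frequently_lt_succ {α : Type*} [Preorder α] {f : ℕ → α}
    {T : ℕ} {S : Set α} (hle : ∀ n ≥ T, f n ≤ f (n + 1))
    (hlt : ∃ᶠ n in atTop, f n < f (n + 1) ∧ f (n + 1) ∈ S) : S.Infinite := by
  obtain ⟨φ, hφ, hφS⟩ :=
    extraction_of_frequently_atTop (hlt.and_eventually (eventually_ge_atTop T))
  have hmono := monotoneOn_nat_Ici_of_le_succ hle
  refine Set.infinite_of_injective_forall_mem (f := fun k => f (φ k + 1))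
    (strictMono_nat_of_lt_succ fun k => ?_).injective fun k => (hφS k).1.2
  calc f (φ k + 1) ≤ f (φ (k + 1)) :=
        hmono ((hφS k).2.trans (Nat.le_succ _)) (hφS (k + 1)).2
          (hφ (Nat.lt_succ_self k))
    _ < f (φ (k + 1) + 1) := (hφS (k + 1)).1.1

section Dynamics

variable {N : Type*}

/-- At step `t + 1` the deviator `j` joins the coalition of `i`. -/
def Joins (π : ℕ → N → Finset N) (dev : ℕ → N) (i j : N) (t : ℕ) : Prop :=
  i ≠ dev (t + 1) ∧ j = dev (t + 1) ∧ j ∈ π (t + 1) i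

theorem eventually_frequently_of_joins [Finite N] {π : ℕ → N → Finset N} {dev : ℕ → N} :
    ∀ᶠ t in atTop, ∀ i j, Joins π dev i j t → ∃ᶠ s in atTop, Joins π dev i j s := by
  refine eventually_all.2 fun i => eventually_all.2 fun j => ?_
  by_cases h : ∃ᶠ s in atTop, Joins π dev i j s
  · exact .of_forall fun _ _ => h
  · exact (not_frequently.1 h).mono fun _ ht hJ => absurd hJ ht

variable [DecidableEq N]

/-- `π t i` is the coalition of agent `i` after `t` steps; step `t + 1` is a deviation of
`dev (t + 1)`. -/
structure IsDeviationRun (π : ℕ → N → Finset N) (dev : ℕ → N) : Prop where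
  mem_self : ∀ t i, i ∈ π t i
  eq_of_mem : ∀ t i j, j ∈ π t i → π t j = π t i
  succ_of_ne : ∀ t i, i ≠ dev (t + 1) →
    π (t + 1) i =
      if i ∈ π (t + 1) (dev (t + 1)) then π (t + 1) (dev (t + 1))
      else (π t i).erase (dev (t + 1))
  joined : ∀ t, π (t + 1) (dev (t + 1)) = {dev (t + 1)} ∨
    ∃ i, i ≠ dev (t + 1) ∧ dev (t + 1) ∉ π t i ∧
      π (t + 1) (dev (t + 1)) = insert (dev (t + 1)) (π t i)

def Appreciates (π : ℕ → N → Finset N) (u : ℕ → N → N → ℚ) (dev : ℕ → N) : Prop :=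
  ∀ t i j, u (t + 1) i j =
    if i ≠ dev (t + 1) ∧ j = dev (t + 1) ∧ j ∈ π (t + 1) i then u t i j + 1 else u t i j

def coalitionValue (v : N → ℚ) (i : N) (C : Finset N) : ℚ :=
  ∑ j ∈ C.erase i, v j

def DeviatorImproves (π : ℕ → N → Finset N) (u : ℕ → N → N → ℚ) (dev : ℕ → N) : Prop :=
  ∀ t, coalitionValue (u t (dev (t + 1))) (dev (t + 1)) (π t (dev (t + 1))) <
    coalitionValue (u t (dev (t + 1))) (dev (t + 1)) (π (t + 1) (dev (t + 1)))

def AbandonedWeaklyImprove (π : ℕ → N → Finset N) (u : ℕ → N → N → ℚ) (dev : ℕ → N) :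
    Prop :=
  ∀ t, ∀ i ∈ π t (dev (t + 1)), i ≠ dev (t + 1) →
    coalitionValue (u t i) i (π t i) ≤ coalitionValue (u t i) i (π (t + 1) i)

variable {π : ℕ → N → Finset N} {dev : ℕ → N} {u : ℕ → N → N → ℚ} {t : ℕ} {i j : N}

namespace IsDeviationRun

theorem mem_comm (h : IsDeviationRun π dev) : i ∈ π t j ↔ j ∈ π t i :=
  ⟨fun hi => h.eq_of_mem t j i hi ▸ h.mem_self t j,
    fun hj => h.eq_of_mem t i j hj ▸ h.mem_self t i⟩

theorem succ_of_mem_joined (h : IsDeviationRun π dev) (hi : i ≠ dev (t + 1))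
    (hjoined : i ∈ π (t + 1) (dev (t + 1))) :
    dev (t + 1) ∉ π t i ∧ π (t + 1) i = insert (dev (t + 1)) (π t i) := by
  rcases h.joined t with hJ | ⟨k, -, hk, hJ⟩
  · exact absurd (Finset.mem_singleton.1 (hJ ▸ hjoined)) hi
  · have hik : i ∈ π t k := (Finset.mem_insert.1 (hJ ▸ hjoined)).resolve_left hi
    rw [h.eq_of_mem t k i hik]
    exact ⟨hk, by rw [h.succ_of_ne t i hi, if_pos hjoined, hJ]⟩

theorem succ_of_not_mem_joined (h : IsDeviationRun π dev) (hi : i ≠ dev (t + 1))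
    (hjoined : i ∉ π (t + 1) (dev (t + 1))) : π (t + 1) i = (π t i).erase (dev (t + 1)) := by
  rw [h.succ_of_ne t i hi, if_neg hjoined]

theorem succ_of_abandoned (h : IsDeviationRun π dev) (hi : i ∈ π t (dev (t + 1)))
    (hne : i ≠ dev (t + 1)) : π (t + 1) i = (π t i).erase (dev (t + 1)) := by
  refine h.succ_of_not_mem_joined hne fun hjoined => ?_
  exact (h.succ_of_mem_joined hne hjoined).1 (h.mem_comm.1 hi)

theorem not_mem_of_joins (h : IsDeviationRun π dev) (hJ : Joins π dev i j t) : j ∉ π t i := by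
  obtain ⟨hi, rfl, hj⟩ := hJ
  exact (h.succ_of_mem_joined hi (h.mem_comm.1 hj)).1

theorem mem_succ (h : IsDeviationRun π dev) (hj : j ∈ π t i) (hi : i ≠ dev (t + 1))
    (hj' : j ≠ dev (t + 1)) : j ∈ π (t + 1) i := by
  by_cases hjoined : i ∈ π (t + 1) (dev (t + 1))
  · rw [(h.succ_of_mem_joined hi hjoined).2]
    exact Finset.mem_insert_of_mem hj
  · rw [h.succ_of_not_mem_joined hi hjoined]
    exact Finset.mem_erase.2 ⟨hj', hj⟩

end IsDeviationRun

theorem utility_succ_of_joins (happ : Appreciates π u dev) (hJ : Joins π dev i j t) :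
    u (t + 1) i j = u t i j + 1 := by
  rw [happ]; exact if_pos hJ

theorem utility_succ_of_not_joins (happ : Appreciates π u dev) (hJ : ¬ Joins π dev i j t) :
    u (t + 1) i j = u t i j := by
  rw [happ]; exact if_neg hJ

theorem utility_mono (happ : Appreciates π u dev) (i j : N) : Monotone fun t => u t i j := by
  refine monotone_nat_of_le_succ fun t => ?_
  by_cases hJ : Joins π dev i j t
  · rw [utility_succ_of_joins happ hJ]
    linarith
  · rw [utility_succ_of_not_joins happ hJ]

theorem utility_eq_of_forall_not_joins (happ : Appreciates π u dev) {T : ℕ}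
    (hJ : ∀ t ≥ T, ¬ Joins π dev i j t) : ∀ t ≥ T, u t i j = u T i j := by
  intro t ht
  induction t, ht using Nat.le_induction with
  | base => rfl
  | succ t ht ih => rw [utility_succ_of_not_joins happ (hJ t ht), ih]

theorem eventually_utility_pos (happ : Appreciates π u dev)
    (hJ : ∃ᶠ t in atTop, Joins π dev i j t) : ∀ᶠ t in atTop, 0 < u t i j := by
  have hgrow : ∀ n : ℕ, ∃ T, u 0 i j + n ≤ u T i j := by
    intro n
    induction n with
    | zero => exact ⟨0, by simp⟩
    | succ n ih =>
      obtain ⟨T, hT⟩ := ih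
      obtain ⟨t, ht, hJt⟩ := hJ.forall_exists_of_atTop T
      refine ⟨t + 1, ?_⟩
      rw [utility_succ_of_joins happ hJt]
      have := utility_mono happ i j ht
      push_cast
      linarith
  obtain ⟨n, hn⟩ := exists_nat_gt (-u 0 i j)
  obtain ⟨T, hT⟩ := hgrow n
  exact eventually_atTop.2 ⟨T, fun t ht => by linarith [utility_mono happ i j ht]⟩

theorem coalitionValue_congr {v w : N → ℚ} {C : Finset N}
    (h : ∀ j ∈ C, j ≠ i → v j = w j) : coalitionValue v i C = coalitionValue w i C :=
  Finset.sum_congr rfl fun j hj => h j (Finset.mem_of_mem_erase hj) (Finset.ne_of_mem_erase hj)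

theorem coalitionValue_eq_add_erase {v : N → ℚ} {C : Finset N} (hj : j ∈ C) (hji : j ≠ i) :
    coalitionValue v i C = v j + coalitionValue v i (C.erase j) := by
  rw [coalitionValue, coalitionValue, Finset.erase_right_comm,
    Finset.add_sum_erase _ _ (Finset.mem_erase.2 ⟨hji, hj⟩)]

theorem coalitionValue_insert {v : N → ℚ} {C : Finset N} (hj : j ∉ C) (hji : j ≠ i) :
    coalitionValue v i (insert j C) = v j + coalitionValue v i C := by
  rw [coalitionValue_eq_add_erase (Finset.mem_insert_self j C) hji, Finset.erase_insert hj]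

theorem utility_deviator_nonpos_of_abandoned (hrun : IsDeviationRun π dev)
    (hCNS : AbandonedWeaklyImprove π u dev) (hi : i ∈ π t (dev (t + 1)))
    (hne : i ≠ dev (t + 1)) : u t i (dev (t + 1)) ≤ 0 := by
  have hweak := hCNS t i hi hne
  rw [hrun.succ_of_abandoned hi hne,
    coalitionValue_eq_add_erase (hrun.mem_comm.1 hi) (Ne.symm hne)] at hweak
  linarith

theorem utility_nonpos_of_separated (hrun : IsDeviationRun π dev)
    (hCNS : AbandonedWeaklyImprove π u dev) (hj : j ∈ π t i) (hj' : j ∉ π (t + 1) i) :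
    u t i j ≤ 0 ∨ u t j i ≤ 0 := by
  have hij : i ≠ j := fun h => hj' (h ▸ hrun.mem_self (t + 1) i)
  by_cases hi : i = dev (t + 1)
  · subst hi
    exact .inr (utility_deviator_nonpos_of_abandoned hrun hCNS hj (Ne.symm hij))
  by_cases hjd : j = dev (t + 1)
  · subst hjd
    exact .inl (utility_deviator_nonpos_of_abandoned hrun hCNS (hrun.mem_comm.1 hj) hij)
  exact absurd (hrun.mem_succ hj hi hjd) hj'

theorem mem_of_utility_pos (hrun : IsDeviationRun π dev)
    (hCNS : AbandonedWeaklyImprove π u dev) {s : ℕ}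
    (hpos : ∀ t ≥ s, 0 < u t i j ∧ 0 < u t j i) (hj : j ∈ π s i) : ∀ t ≥ s, j ∈ π t i := by
  intro t ht
  induction t, ht using Nat.le_induction with
  | base => exact hj
  | succ t ht ih =>
    by_contra hj'
    have := hpos t ht
    rcases utility_nonpos_of_separated hrun hCNS ih hj' with h | h <;> linarith

/-- Two agents cannot keep joining each other's coalitions: once they value each other
positively, neither can leave the other, so one of them can no longer join. -/
theorem not_frequently_joins_of_frequently_joins (hrun : IsDeviationRun π dev)
    (happ : Appreciates π u dev) (hCNS : AbandonedWeaklyImprove π u dev)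
    (hJ : ∃ᶠ t in atTop, Joins π dev i j t) : ¬ ∃ᶠ t in atTop, Joins π dev j i t := by
  intro hJ'
  obtain ⟨T, hT⟩ :=
    eventually_atTop.1 ((eventually_utility_pos happ hJ).and (eventually_utility_pos happ hJ'))
  obtain ⟨t₁, ht₁, hJ₁⟩ := hJ.forall_exists_of_atTop T
  obtain ⟨t₂, ht₂, hJ₂⟩ := hJ.forall_exists_of_atTop (t₁ + 1)
  have htogether := mem_of_utility_pos hrun hCNS (fun t ht => hT t (by omega)) hJ₁.2.2
  exact hrun.not_mem_of_joins hJ₂ (htogether t₂ ht₂)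

theorem eventually_utility_pos_of_joins [Finite N] (happ : Appreciates π u dev) :
    ∀ᶠ t in atTop, ∀ i j, Joins π dev i j t → 0 < u t i j := by
  refine eventually_all.2 fun i => eventually_all.2 fun j => ?_
  by_cases h : ∃ᶠ s in atTop, Joins π dev i j s
  · exact (eventually_utility_pos happ h).mono fun _ ht _ => ht
  · exact (not_frequently.1 h).mono fun _ ht hJ => absurd hJ ht

theorem coalitionValue_lt_succ_of_eq_dev (happ : Appreciates π u dev)
    (hNS : DeviatorImproves π u dev) (hi : dev (t + 1) = i) :
    coalitionValue (u t i) i (π t i) < coalitionValue (u (t + 1) i) i (π (t + 1) i) := by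
  have hu : u (t + 1) i = u t i :=
    funext fun j => utility_succ_of_not_joins happ fun hJ => hJ.1 hi.symm
  subst hi
  rw [hu]
  exact hNS t

theorem coalitionValue_le_succ (hrun : IsDeviationRun π dev) (happ : Appreciates π u dev)
    (hCNS : AbandonedWeaklyImprove π u dev) (hi : i ≠ dev (t + 1))
    (hpos : Joins π dev i (dev (t + 1)) t → 0 < u t i (dev (t + 1))) :
    coalitionValue (u t i) i (π t i) ≤ coalitionValue (u (t + 1) i) i (π (t + 1) i) := by
  by_cases hjoined : i ∈ π (t + 1) (dev (t + 1))
  · obtain ⟨hdev, hsucc⟩ := hrun.succ_of_mem_joined hi hjoined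
    have hJ : Joins π dev i (dev (t + 1)) t := ⟨hi, rfl, hsucc ▸ Finset.mem_insert_self _ _⟩
    have hrest : coalitionValue (u (t + 1) i) i (π t i) = coalitionValue (u t i) i (π t i) :=
      coalitionValue_congr fun j hj _ =>
        utility_succ_of_not_joins happ fun hJ' => hdev (hJ'.2.1 ▸ hj)
    rw [hsucc, coalitionValue_insert hdev (Ne.symm hi), utility_succ_of_joins happ hJ, hrest]
    linarith [hpos hJ]
  · have hsucc := hrun.succ_of_not_mem_joined hi hjoined
    have hu : u (t + 1) i = u t i := funext fun j => utility_succ_of_not_joins happ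
      fun hJ => (Finset.mem_erase.1 (hsucc ▸ hJ.2.2)).1 hJ.2.1
    rw [hu]
    by_cases hdev : dev (t + 1) ∈ π t i
    · exact hCNS t i (hrun.mem_comm.1 hdev) hi
    · rw [hsucc, Finset.erase_eq_of_notMem hdev]

/-- Once every join is recurrent, the members of the coalition a deviator joins can never join
the deviator again, by `not_frequently_joins_of_frequently_joins`, so its utilities for them are
frozen. -/
theorem coalitionValue_succ_eq_of_eq_dev (hrun : IsDeviationRun π dev)
    (happ : Appreciates π u dev) (hCNS : AbandonedWeaklyImprove π u dev) {T : ℕ}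
    (hrec : ∀ s ≥ T, ∀ i j, Joins π dev i j s → ∃ᶠ r in atTop, Joins π dev i j r)
    (ht : T ≤ t) (hi : dev (t + 1) = i) :
    coalitionValue (u (t + 1) i) i (π (t + 1) i) = coalitionValue (u T i) i (π (t + 1) i) := by
  refine coalitionValue_congr fun j hj hji => ?_
  have hJ : Joins π dev j i t := ⟨hi ▸ hji, hi.symm, hrun.mem_comm.1 hj⟩
  have hnot := not_frequently_joins_of_frequently_joins hrun happ hCNS (hrec t ht j i hJ)
  exact utility_eq_of_forall_not_joins happ (fun s hs hJ' => hnot (hrec s hs i j hJ')) (t + 1)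
    (by omega)

end Dynamics

/-- In any additively separable hedonic game with appreciative agents, every
execution of the contractual Nash stability (CNS) dynamics converges: there is
no infinite sequence of CNS deviations.

The data is: a finite agent set `N`, a sequence of partitions given by
coalitions `π t i`, evolving at each step `t + 1` by a single-agent deviation
of `dev (t + 1)`, utilities evolving by appreciation (members of the joined
coalition increase their utility for the joining deviator by `1`), additive
aggregation, and every deviation being a CNS deviation: the deviator strictly
improves and every member of the abandoned coalition weakly improves.  The
conclusion is `False`: no such infinite execution exists. -/
theorem stmt_17 {N : Type*} [Fintype N] [DecidableEq N]
    (π : ℕ → N → Finset N) (u : ℕ → N → N → ℚ) (dev : ℕ → N)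
    (hmem : ∀ t i, i ∈ π t i)
    (hpart : ∀ t i j, j ∈ π t i → π t j = π t i)
    (hdev : ∀ t i, i ≠ dev (t + 1) →
      π (t + 1) i =
        if i ∈ π (t + 1) (dev (t + 1)) then π (t + 1) (dev (t + 1))
        else (π t i).erase (dev (t + 1)))
    (hjoin : ∀ t, π (t + 1) (dev (t + 1)) = {dev (t + 1)} ∨
      ∃ i, i ≠ dev (t + 1) ∧ dev (t + 1) ∉ π t i ∧
        π (t + 1) (dev (t + 1)) = insert (dev (t + 1)) (π t i))
    (happ : ∀ t i j, u (t + 1) i j =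
      if i ≠ dev (t + 1) ∧ j = dev (t + 1) ∧ j ∈ π (t + 1) i then u t i j + 1
      else u t i j)
    (hNS : ∀ t,
      (∑ j ∈ (π t (dev (t + 1))).erase (dev (t + 1)), u t (dev (t + 1)) j) <
        ∑ j ∈ (π (t + 1) (dev (t + 1))).erase (dev (t + 1)), u t (dev (t + 1)) j)
    (hCNS : ∀ t, ∀ i ∈ π t (dev (t + 1)), i ≠ dev (t + 1) →
      (∑ j ∈ (π t i).erase i, u t i j) ≤ ∑ j ∈ (π (t + 1) i).erase i, u t i j) :
    False := by
  have hrun : IsDeviationRun π dev := ⟨hmem, hpart, hdev, hjoin⟩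
  obtain ⟨d, hd⟩ : ∃ d, ∃ᶠ t in atTop, dev (t + 1) = d :=
    frequently_exists.1 (.of_forall fun t => ⟨dev (t + 1), rfl⟩)
  obtain ⟨T, hT⟩ := eventually_atTop.1
    ((eventually_frequently_of_joins (π := π) (dev := dev)).and
      (eventually_utility_pos_of_joins happ))
  let value t := coalitionValue (u t d) d (π t d)
  have hle : ∀ t ≥ T, value t ≤ value (t + 1) := fun t ht => by
    by_cases hdt : dev (t + 1) = d
    · exact (coalitionValue_lt_succ_of_eq_dev happ hNS hdt).le
    · exact coalitionValue_le_succ hrun happ hCNS (Ne.symm hdt) ((hT t ht).2 d _)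
  have hlt : ∃ᶠ t in atTop,
      value t < value (t + 1) ∧ value (t + 1) ∈ Set.range (coalitionValue (u T d) d) :=
    (hd.and_eventually (eventually_ge_atTop T)).mono fun t ⟨hdt, ht⟩ =>
      ⟨coalitionValue_lt_succ_of_eq_dev happ hNS hdt, _,
        (coalitionValue_succ_eq_of_eq_dev hrun happ hCNS (fun s hs => (hT s hs).1) ht hdt).symm⟩
  exact (Set.infinite_of_le_succ_of_frequently_lt_succ hle hlt).not_finite (Set.finite_range _)
end

section
/- In any hedonic game with deviator-resentful agents whose aggregation functions satisfy enemy domination, every execution of the individually rational strict-core-stability dynamics converges; in particular the individually rational core-stability and individual-stability dynamics converge. -/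
/-!
Resentment only ever lowers utilities, and every time `i` abandons `j` her utility for `j` drops
by one. So if `i` abandoned `j` infinitely often, that utility would eventually fall below the
enemy-domination threshold, after which individual rationality forbids `i` and `j` to deviate
together; but between two abandonments `j` must rejoin `i`, which only a joint deviation can
achieve. Hence every pair abandons only finitely often, and from some time on no deviator leaves
anybody behind. From then on coalitions only merge, and each step strictly enlarges the coalition
of the strictly improving deviator, so `∑ i, #(π t i)` increases forever while staying below
`|N|²`.
-/

open Finset

section

variable {N : Type*}

def EnemyDomination (A : N → Finset N → (N → ℚ) → ℚ) : Prop :=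
  ∀ (i : N) (u : N → ℚ) (j : N), j ≠ i →
    ∃ c : ℚ, ∀ u' : N → ℚ, (∀ k, u' k ≤ u k) → u' j ≤ c →
      ∀ C : Finset N, i ∈ C → j ∈ C → A i C u' < A i ({i} : Finset N) u'

structure IsDeviationSequence [DecidableEq N] (π : ℕ → N → Finset N) (D : ℕ → Finset N) :
    Prop where
  mem_self : ∀ t i, i ∈ π t i
  eq_of_mem : ∀ t i j, j ∈ π t i → π t j = π t i
  deviator : ∀ t, ∀ i ∈ D (t + 1), π (t + 1) i = D (t + 1)
  nondeviator : ∀ t, ∀ i ∉ D (t + 1), π (t + 1) i = π t i \ D (t + 1)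

def Abandons (π : ℕ → N → Finset N) (D : ℕ → Finset N) (t : ℕ) (i j : N) : Prop :=
  i ∈ D (t + 1) ∧ j ∈ π t i ∧ j ∉ D (t + 1)

instance [DecidableEq N] (π : ℕ → N → Finset N) (D : ℕ → Finset N) (t : ℕ) (i j : N) :
    Decidable (Abandons π D t i j) :=
  inferInstanceAs (Decidable (_ ∧ _ ∧ _))

theorem EnemyDomination.exists_not_deviate_together {A : N → Finset N → (N → ℚ) → ℚ}
    (hA : EnemyDomination A) {D : ℕ → Finset N} {u : ℕ → N → N → ℚ} {i j : N}
    (hanti : ∀ k, Antitone fun t => u t i k)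
    (hIR : ∀ t, ∀ i ∈ D (t + 1), A i ({i} : Finset N) (u t i) ≤ A i (D (t + 1)) (u t i))
    (hji : j ≠ i) :
    ∃ c : ℚ, ∀ s, u s i j ≤ c → i ∈ D (s + 1) → j ∉ D (s + 1) := by
  obtain ⟨c, hc⟩ := hA i (u 0 i) j hji
  refine ⟨c, fun s hlow hi hj => ?_⟩
  have hworse := hc (u s i) (fun k => hanti k (Nat.zero_le s)) hlow (D (s + 1)) hi hj
  exact (hIR s i hi).not_gt hworse

section

variable [DecidableEq N] {π : ℕ → N → Finset N} {D : ℕ → Finset N}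

def IsDeviatorResentful (π : ℕ → N → Finset N) (D : ℕ → Finset N) (u : ℕ → N → N → ℚ) :
    Prop :=
  ∀ t i j, u (t + 1) i j =
    if i ∈ D (t + 1) ∧ j ∈ π t i ∧ j ∉ D (t + 1) then u t i j - 1 else u t i j

theorem IsDeviatorResentful.eq_sub_count {u : ℕ → N → N → ℚ}
    (hres : IsDeviatorResentful π D u) (i j : N) (t : ℕ) :
    u t i j = u 0 i j - Nat.count (fun s => Abandons π D s i j) t := by
  induction t with
  | zero => simp
  | succ t ih =>
    rw [Nat.count_succ, hres, ih]
    by_cases hab : Abandons π D t i j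
    · rw [if_pos (show i ∈ D (t + 1) ∧ j ∈ π t i ∧ j ∉ D (t + 1) from hab), if_pos hab]
      push_cast
      ring
    · rw [if_neg (show ¬(i ∈ D (t + 1) ∧ j ∈ π t i ∧ j ∉ D (t + 1)) from hab), if_neg hab]
      simp

theorem IsDeviatorResentful.antitone {u : ℕ → N → N → ℚ}
    (hres : IsDeviatorResentful π D u) (i j : N) : Antitone fun t => u t i j := by
  intro s t hst
  simp only [hres.eq_sub_count i j s, hres.eq_sub_count i j t]
  gcongr

namespace IsDeviationSequence

theorem mem_deviation_of_join (h : IsDeviationSequence π D) {t : ℕ} {i j : N}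
    (hjoin : j ∈ π (t + 1) i) (hsep : j ∉ π t i) :
    i ∈ D (t + 1) ∧ j ∈ D (t + 1) := by
  by_cases hi : i ∈ D (t + 1)
  · rw [h.deviator t i hi] at hjoin
    exact ⟨hi, hjoin⟩
  · rw [h.nondeviator t i hi] at hjoin
    exact absurd (mem_sdiff.mp hjoin).1 hsep

theorem exists_joint_deviation (h : IsDeviationSequence π D) {a b : ℕ} {i j : N} (hab : a ≤ b)
    (hsep : j ∉ π a i) (hjoin : j ∈ π b i) : ∃ s, a ≤ s ∧ i ∈ D (s + 1) ∧ j ∈ D (s + 1) := by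
  induction b, hab using Nat.le_induction with
  | base => exact absurd hjoin hsep
  | succ b hab ih =>
    by_cases hb : j ∈ π b i
    · exact ih hb
    · exact ⟨b, hab, h.mem_deviation_of_join hjoin hb⟩

theorem finite_abandons (h : IsDeviationSequence π D) {A : N → Finset N → (N → ℚ) → ℚ}
    (hA : EnemyDomination A) {u : ℕ → N → N → ℚ}
    (hres : IsDeviatorResentful π D u)
    (hIR : ∀ t, ∀ i ∈ D (t + 1), A i ({i} : Finset N) (u t i) ≤ A i (D (t + 1)) (u t i))
    (i j : N) : {t | Abandons π D t i j}.Finite := by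
  by_cases hji : j = i
  · subst hji
    exact Set.finite_empty.subset fun t ⟨hj, _, hnj⟩ => hnj hj
  by_contra hinf
  obtain ⟨c, hc⟩ := hA.exists_not_deviate_together (hres.antitone i) hIR hji
  obtain ⟨n, hn⟩ := exists_nat_ge (u 0 i j - c)
  set p := fun s => Abandons π D s i j
  have hlow : u (Nat.nth p n) i j ≤ c := by
    rw [hres.eq_sub_count, Nat.count_nth_of_infinite hinf]
    linarith
  -- `i` leaves `j` at the `n`-th abandonment and is with `j` again at the next one.
  obtain ⟨hi, -, hj⟩ := Nat.nth_mem_of_infinite hinf n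
  have hsep : j ∉ π (Nat.nth p n + 1) i := by rwa [h.deviator _ i hi]
  obtain ⟨-, hjoin, -⟩ := Nat.nth_mem_of_infinite hinf (n + 1)
  obtain ⟨s, hs, hiD, hjD⟩ := h.exists_joint_deviation
    (Nat.nth_strictMono hinf n.lt_succ_self) hsep hjoin
  exact hc s ((hres.antitone i j (by omega)).trans hlow) hiD hjD

theorem subset_succ (h : IsDeviationSequence π D) {t : ℕ}
    (hno : ∀ i j, ¬Abandons π D t i j) (i : N) : π t i ⊆ π (t + 1) i := by
  intro j hj
  by_cases hi : i ∈ D (t + 1)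
  · rw [h.deviator t i hi]
    by_contra hjD
    exact hno i j ⟨hi, hj, hjD⟩
  · rw [h.nondeviator t i hi, mem_sdiff]
    refine ⟨hj, fun hjD => hno j i ⟨hjD, ?_, hi⟩⟩
    rw [h.eq_of_mem t i j hj]
    exact h.mem_self t i

theorem sum_card_lt_succ [Fintype N] (h : IsDeviationSequence π D) {t : ℕ}
    (hno : ∀ i j, ¬Abandons π D t i j) (hmove : ∃ i ∈ D (t + 1), π t i ≠ D (t + 1)) :
    ∑ i, #(π t i) < ∑ i, #(π (t + 1) i) := by
  obtain ⟨i, hi, hne⟩ := hmove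
  refine sum_lt_sum (fun k _ => card_le_card (h.subset_succ hno k)) ⟨i, mem_univ i, ?_⟩
  refine card_lt_card (Finset.ssubset_iff_subset_ne.mpr ⟨h.subset_succ hno i, ?_⟩)
  rwa [h.deviator t i hi]

theorem exists_infinite_abandons [Fintype N] (h : IsDeviationSequence π D)
    (hmove : ∀ t, ∃ i ∈ D (t + 1), π t i ≠ D (t + 1)) :
    ∃ i j, {t | Abandons π D t i j}.Infinite := by
  by_contra! hfin
  have hev : ∀ᶠ t in Filter.atTop, ∀ i j, ¬Abandons π D t i j := by
    simp only [Filter.eventually_all, ← Nat.cofinite_eq_atTop]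
    exact fun i j => (hfin i j).eventually_cofinite_notMem
  obtain ⟨b, hb⟩ := Filter.eventually_atTop.mp hev
  set Φ := fun k => ∑ i, #(π (b + k) i)
  have hΦ : StrictMono Φ :=
    strictMono_nat_of_lt_succ fun k => h.sum_card_lt_succ (hb _ (by omega)) (hmove _)
  have hbound : Φ (Fintype.card N * Fintype.card N + 1) ≤ Fintype.card N * Fintype.card N :=
    calc Φ _ ≤ ∑ _i : N, Fintype.card N := sum_le_sum fun i _ => card_le_univ _
      _ = Fintype.card N * Fintype.card N := by simp
  have hgrow : Fintype.card N * Fintype.card N + 1 ≤ Φ (Fintype.card N * Fintype.card N + 1) :=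
    hΦ.id_le _
  omega

end IsDeviationSequence

end

end

theorem stmt_19_general {N : Type*} [Fintype N] [DecidableEq N]
    (A : N → Finset N → (N → ℚ) → ℚ)
    (hED : ∀ (i : N) (u : N → ℚ) (j : N), j ≠ i →
      ∃ c : ℚ, ∀ u' : N → ℚ, (∀ k, u' k ≤ u k) → u' j ≤ c →
        ∀ C : Finset N, i ∈ C → j ∈ C → A i C u' < A i ({i} : Finset N) u')
    (π : ℕ → N → Finset N) (u : ℕ → N → N → ℚ) (D : ℕ → Finset N)
    (hmem : ∀ t i, i ∈ π t i)
    (hpart : ∀ t i j, j ∈ π t i → π t j = π t i)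
    (hin : ∀ t, ∀ i ∈ D (t + 1), π (t + 1) i = D (t + 1))
    (hout : ∀ t, ∀ i ∉ D (t + 1), π (t + 1) i = π t i \ D (t + 1))
    (hres : ∀ t i j, u (t + 1) i j =
      if i ∈ D (t + 1) ∧ j ∈ π t i ∧ j ∉ D (t + 1) then u t i j - 1
      else u t i j)
    (hSCSstrict : ∀ t, ∃ i ∈ D (t + 1),
      A i (π t i) (u t i) < A i (D (t + 1)) (u t i))
    (hIR : ∀ t, ∀ i ∈ D (t + 1),
      A i ({i} : Finset N) (u t i) ≤ A i (D (t + 1)) (u t i)) :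
    False := by
  have h : IsDeviationSequence π D := ⟨hmem, hpart, hin, hout⟩
  have hmove : ∀ t, ∃ i ∈ D (t + 1), π t i ≠ D (t + 1) := fun t => by
    obtain ⟨i, hi, hlt⟩ := hSCSstrict t
    exact ⟨i, hi, fun heq => hlt.ne (by rw [heq])⟩
  obtain ⟨i, j, hinf⟩ := h.exists_infinite_abandons hmove
  exact hinf (h.finite_abandons hED hres hIR i j)

/-- In any hedonic game with deviator-resentful agents whose aggregation
functions satisfy enemy domination, every execution of the individually
rational strict-core stability (SCS) dynamics converges: there is no infinite
sequence of individually rational SCS deviations.  Since every individually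
rational core-stability and individual-stability deviation is an individually
rational SCS deviation, this in particular implies convergence of the
individually rational CS and IS dynamics.

The data is: a finite agent set `N`, aggregation functions `A i` satisfying
enemy domination, a sequence of partitions given by coalitions `π t i`,
evolving at each step `t + 1` by a group deviation of the coalition `D (t + 1)`,
utilities evolving by deviator-resent (each deviator decreases her own utility
for each agent she abandons by `1`), every deviation being an SCS deviation
(every deviator weakly improves, some deviator strictly improves) that is
individually rational for each deviator.  The conclusion is `False`. -/
theorem stmt_19 {N : Type*} [Fintype N] [DecidableEq N]
    (A : N → Finset N → (N → ℚ) → ℚ)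
    (hED : ∀ (i : N) (u : N → ℚ) (j : N), j ≠ i →
      ∃ c : ℚ, ∀ u' : N → ℚ, (∀ k, u' k ≤ u k) → u' j ≤ c →
        ∀ C : Finset N, i ∈ C → j ∈ C → A i C u' < A i ({i} : Finset N) u')
    (π : ℕ → N → Finset N) (u : ℕ → N → N → ℚ) (D : ℕ → Finset N)
    (hmem : ∀ t i, i ∈ π t i)
    (hpart : ∀ t i j, j ∈ π t i → π t j = π t i)
    (hin : ∀ t, ∀ i ∈ D (t + 1), π (t + 1) i = D (t + 1))
    (hout : ∀ t, ∀ i ∉ D (t + 1), π (t + 1) i = π t i \ D (t + 1))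
    (hres : ∀ t i j, u (t + 1) i j =
      if i ∈ D (t + 1) ∧ j ∈ π t i ∧ j ∉ D (t + 1) then u t i j - 1
      else u t i j)
    (hSCSweak : ∀ t, ∀ i ∈ D (t + 1),
      A i (π t i) (u t i) ≤ A i (D (t + 1)) (u t i))
    (hSCSstrict : ∀ t, ∃ i ∈ D (t + 1),
      A i (π t i) (u t i) < A i (D (t + 1)) (u t i))
    (hIR : ∀ t, ∀ i ∈ D (t + 1),
      A i ({i} : Finset N) (u t i) ≤ A i (D (t + 1)) (u t i)) :
    False :=
  stmt_19_general A hED π u D hmem hpart hin hout hres hSCSstrict hIR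
end
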